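/- arXiv:2506.14480 — 5 statements merged into one kernel-verified Lean document; each statement's English description precedes it below -/
import Mathlib

section
/- For all real α, β, the 5×5 matrix M_{α,β} with upper-left 2×2 block [[cosh(α)cosh(β), sinh(α)sinh(β)],[sinh(α)sinh(β), cosh(α)cosh(β)]] and diagonal entries cosh(β), cosh(α), 1 in positions (3,3), (4,4), (5,5) (all other entries zero) maps the Lorentz cone L_4 into itself. -/
/-! `M_{α,β}` acts on `(t, x)` as the hyperbolic map `[[c, s], [s, c]]`, which multiplies the
Minkowski form `t² - x²` by `c² - s²`, and scales the remaining coordinates by factors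
`cosh β, cosh α, 1`. With `c = cosh α cosh β`, `s = sinh α sinh β` one has
`c² - s² = cosh² α + cosh² β - 1`, which dominates the square of each of these factors, so the
spatial part of the image stays inside the cone; positivity of the time coordinate follows from
`|s| ≤ c`. -/

open Real

/-- The 5×5 matrix `M_{α,β}` from the paper. -/
noncomputable def Mab (α β : ℝ) : Matrix (Fin 5) (Fin 5) ℝ :=
  !![cosh α * cosh β, sinh α * sinh β, 0, 0, 0;
     sinh α * sinh β, cosh α * cosh β, 0, 0, 0;
     0, 0, cosh β, 0, 0;
     0, 0, 0, cosh α, 0;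
     0, 0, 0, 0, 1]

lemma Mab_mulVec (α β : ℝ) (v : Fin 5 → ℝ) :
    (Mab α β).mulVec v =
      ![cosh α * cosh β * v 0 + sinh α * sinh β * v 1,
        sinh α * sinh β * v 0 + cosh α * cosh β * v 1,
        cosh β * v 2, cosh α * v 3, v 4] := by
  ext i
  fin_cases i <;> simp [Mab, Matrix.mulVec, dotProduct, Fin.sum_univ_five]

lemma cosh_mul_cosh_sq_sub_sinh_mul_sinh_sq (α β : ℝ) :
    (cosh α * cosh β) ^ 2 - (sinh α * sinh β) ^ 2 = cosh α ^ 2 + cosh β ^ 2 - 1 := by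
  rw [mul_pow, mul_pow, cosh_sq α, cosh_sq β]
  ring

lemma add_mul_nonneg_of_sq_le_sq {c s t x : ℝ} (hs : s ^ 2 ≤ c ^ 2) (hc : 0 ≤ c)
    (hx : x ^ 2 ≤ t ^ 2) (ht : 0 ≤ t) : 0 ≤ c * t + s * x := by
  have hsx : |s * x| ≤ c * t := by
    rw [abs_mul]
    exact mul_le_mul (abs_le_of_sq_le_sq hs hc) (abs_le_of_sq_le_sq hx ht) (abs_nonneg x) hc
  linarith [neg_abs_le (s * x)]

lemma boost_sq_add_le_sq {c s p q r t x y z w : ℝ} (hp : p ^ 2 ≤ c ^ 2 - s ^ 2)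
    (hq : q ^ 2 ≤ c ^ 2 - s ^ 2) (hr : r ^ 2 ≤ c ^ 2 - s ^ 2)
    (h : x ^ 2 + y ^ 2 + z ^ 2 + w ^ 2 ≤ t ^ 2) :
    (s * t + c * x) ^ 2 + (p * y) ^ 2 + (q * z) ^ 2 + (r * w) ^ 2 ≤ (c * t + s * x) ^ 2 := by
  have hd : 0 ≤ c ^ 2 - s ^ 2 := (sq_nonneg p).trans hp
  have hspatial : p ^ 2 * y ^ 2 + q ^ 2 * z ^ 2 + r ^ 2 * w ^ 2
      ≤ (c ^ 2 - s ^ 2) * (y ^ 2 + z ^ 2 + w ^ 2) := by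
    nlinarith [mul_le_mul_of_nonneg_right hp (sq_nonneg y),
      mul_le_mul_of_nonneg_right hq (sq_nonneg z), mul_le_mul_of_nonneg_right hr (sq_nonneg w)]
  have hcone : (c ^ 2 - s ^ 2) * (y ^ 2 + z ^ 2 + w ^ 2) ≤ (c ^ 2 - s ^ 2) * (t ^ 2 - x ^ 2) :=
    mul_le_mul_of_nonneg_left (by linarith) hd
  have hminkowski :
      (c * t + s * x) ^ 2 - (s * t + c * x) ^ 2 = (c ^ 2 - s ^ 2) * (t ^ 2 - x ^ 2) := by
    ring
  nlinarith

/-- For all real `α, β`, the matrix `M_{α,β}` maps the Lorentz cone `L_4 ⊆ ℝ^5`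
(first coordinate is the time coordinate) into itself. -/
theorem Mab_maps_lorentzCone (α β : ℝ) (v : Fin 5 → ℝ)
    (hv : Real.sqrt ((v 1) ^ 2 + (v 2) ^ 2 + (v 3) ^ 2 + (v 4) ^ 2) ≤ v 0) :
    Real.sqrt (((Mab α β).mulVec v 1) ^ 2 + ((Mab α β).mulVec v 2) ^ 2 +
        ((Mab α β).mulVec v 3) ^ 2 + ((Mab α β).mulVec v 4) ^ 2) ≤
      (Mab α β).mulVec v 0 := by
  obtain ⟨ht, hsq⟩ := Real.sqrt_le_iff.mp hv
  have hd := cosh_mul_cosh_sq_sub_sinh_mul_sinh_sq α β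
  have hα : 1 ≤ cosh α ^ 2 := one_le_pow₀ (one_le_cosh α)
  have hβ : 1 ≤ cosh β ^ 2 := one_le_pow₀ (one_le_cosh β)
  have hx : v 1 ^ 2 ≤ v 0 ^ 2 := by nlinarith [sq_nonneg (v 2), sq_nonneg (v 3), sq_nonneg (v 4)]
  simp only [Mab_mulVec, Matrix.cons_val]
  refine Real.sqrt_le_iff.mpr ⟨?_, ?_⟩
  · exact add_mul_nonneg_of_sq_le_sq (by linarith) (by positivity) hx ht
  · simpa using boost_sq_add_le_sq (p := cosh β) (q := cosh α) (r := 1)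
      (by linarith) (by linarith) (by linarith) hsq
end

section
/- For all real α, β, one has M_{α,β}^T J M_{α,β} − (cosh(α)² + cosh(β)² − 1) J is positive semidefinite, where J = diag(1,−1,−1,−1,−1) and M_{α,β} is the 5×5 matrix with upper-left 2×2 block [[cosh(α)cosh(β), sinh(α)sinh(β)],[sinh(α)sinh(β), cosh(α)cosh(β)]], diagonal entries cosh(β), cosh(α), 1 in positions (3,3),(4,4),(5,5), and zeros elsewhere. -/
open Real Matrix

/-- The matrix `J = diag(1,-1,-1,-1,-1)`. -/
def Jmat : Matrix (Fin 5) (Fin 5) ℝ :=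
  Matrix.diagonal ![1, -1, -1, -1, -1]

/-!
`M_{α,β}ᵀ J M_{α,β} - (cosh² α + cosh² β - 1) J` is the diagonal matrix
`diag(0, 0, sinh² α, sinh² β, sinh² α + sinh² β)`: in the upper-left block both diagonal entries
vanish because `(cosh α cosh β)² - (sinh α sinh β)² = cosh² α + cosh² β - 1`. A diagonal matrix
with nonnegative entries is positive semidefinite.
-/

lemma Mab_transpose_mul_Jmat_mul_Mab_sub (α β : ℝ) :
    (Mab α β)ᵀ * Jmat * Mab α β - (cosh α ^ 2 + cosh β ^ 2 - 1) • Jmat =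
      diagonal ![0, 0, sinh α ^ 2, sinh β ^ 2, sinh α ^ 2 + sinh β ^ 2] := by
  ext i j
  fin_cases i <;> fin_cases j <;>
    simp [Mab, Jmat, Matrix.mul_apply, Fin.sum_univ_five] <;>
    ring_nf <;> simp only [sinh_sq] <;> ring

/-- For all real `α, β`, the matrix `M_{α,β}ᵀ J M_{α,β} - (cosh(α)² + cosh(β)² - 1) J`
is positive semidefinite (all quadratic form values are nonnegative on ℝ^5). -/
theorem Mab_J_inequality (α β : ℝ) (x : Fin 5 → ℝ) :
    0 ≤ x ⬝ᵥ (((Mab α β)ᵀ * Jmat * (Mab α β) -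
        (Real.cosh α ^ 2 + Real.cosh β ^ 2 - 1) • Jmat).mulVec x) := by
  have hpsd : (diagonal ![0, 0, sinh α ^ 2, sinh β ^ 2, sinh α ^ 2 + sinh β ^ 2]).PosSemidef := by
    refine PosSemidef.diagonal fun i => ?_
    fin_cases i <;> simp [add_nonneg, sq_nonneg]
  simpa [Mab_transpose_mul_Jmat_mul_Mab_sub] using hpsd.dotProduct_mulVec_nonneg x
end

section
/- Let w ∈ ℝ^k with ‖w‖₂ = 1, and suppose (x,b) ∈ ℝ × ℝ^k satisfies both 1 − x ≥ ‖b − w‖₂ and 1 + x ≥ ‖b + w‖₂. Then (x,b) = α(1,w) for some α ∈ [−1,1]. -/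
/-!
The triangle inequality gives `‖b - w‖ + ‖b + w‖ ≥ ‖2 • w‖ = 2`, so both hypotheses hold with
equality. Expanding `‖b ± w‖² = (1 ± x)²` then yields `⟪b, w⟫ = x` and `‖b‖² = x²`, hence
`‖b - x • w‖² = ‖b‖² - 2 x ⟪b, w⟫ + x² = 0`.
-/

theorem two_mul_norm_le_norm_sub_add_norm_add {E : Type*} [SeminormedAddCommGroup E]
    [NormedSpace ℝ E] (b w : E) : 2 * ‖w‖ ≤ ‖b - w‖ + ‖b + w‖ := by
  calc 2 * ‖w‖ = ‖(b + w) - (b - w)‖ := by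
        rw [show (b + w) - (b - w) = (2 : ℝ) • w by module, norm_smul, Real.norm_two]
    _ ≤ ‖b + w‖ + ‖b - w‖ := norm_sub_le _ _
    _ = ‖b - w‖ + ‖b + w‖ := add_comm _ _

theorem eq_smul_of_norm_sub_eq_of_norm_add_eq {E : Type*} [NormedAddCommGroup E]
    [InnerProductSpace ℝ E] {b w : E} {x : ℝ} (hw : ‖w‖ = 1) (hsub : ‖b - w‖ = 1 - x)
    (hadd : ‖b + w‖ = 1 + x) : b = x • w := by
  have hsub_sq := norm_sub_sq_real b w
  have hadd_sq := norm_add_sq_real b w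
  rw [hsub, hw] at hsub_sq
  rw [hadd, hw] at hadd_sq
  have hinner : inner ℝ b w = x := by linarith
  have hnorm : ‖b‖ ^ 2 = x ^ 2 := by linarith
  have hzero : ‖b - x • w‖ ^ 2 = 0 := by
    rw [norm_sub_sq_real, real_inner_smul_right, norm_smul, mul_pow, Real.norm_eq_abs, sq_abs,
      hinner, hnorm, hw]
    ring
  rw [← sub_eq_zero, ← norm_eq_zero]
  exact pow_eq_zero_iff two_ne_zero |>.mp hzero

/-- If `‖w‖₂ = 1` and `(x,b)` satisfies `1 - x ≥ ‖b - w‖₂` and `1 + x ≥ ‖b + w‖₂`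
(i.e. `(1,w) ± (x,b)` lies in the Lorentz cone), then `(x,b) = α(1,w)` for some
`α ∈ [-1,1]`. -/
theorem extremal_ray_pinching {k : ℕ} (w b : EuclideanSpace ℝ (Fin k)) (x : ℝ)
    (hw : ‖w‖ = 1) (h1 : ‖b - w‖ ≤ 1 - x) (h2 : ‖b + w‖ ≤ 1 + x) :
    ∃ α ∈ Set.Icc (-1 : ℝ) 1, x = α ∧ b = α • w := by
  have htri := two_mul_norm_le_norm_sub_add_norm_add b w
  rw [hw] at htri
  have hsub : ‖b - w‖ = 1 - x := by linarith
  have hadd : ‖b + w‖ = 1 + x := by linarith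
  refine ⟨x, ⟨?_, ?_⟩, rfl, eq_smul_of_norm_sub_eq_of_norm_add_eq hw hsub hadd⟩ <;>
    linarith [norm_nonneg (b - w), norm_nonneg (b + w)]
end

section
/- Let v₁, v₂ : ℝ^n → ℝ^m be linear maps with Frobenius norms hs(v₁) ≤ s and hs(v₂) ≤ t, written in block form v₁ = [[r₁, x₁ᵀ],[y₁, V₁]] and v₂ = [[r₂, x₂ᵀ],[y₂, V₂]]. Then for all real α, β: s·t·cosh(α)cosh(β) + r₁r₂·cosh(α)cosh(β) + (s·r₂ + t·r₁)·sinh(α)sinh(β) + ⟨x₁,x₂⟩·cosh(β) + ⟨y₁,y₂⟩·cosh(α) + Tr(V₁ᵀV₂) ≥ 0. -/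
/-!
Put `a = cosh α`, `b = cosh β`, `A = t a b + r₂ sinh α sinh β` and
`B = r₂ a b + t sinh α sinh β`. The left-hand side is `s A + ⟨v₁, w⟩`, where `w` is `v₂` with its
corner replaced by `B`, its first row scaled by `b` and its first column by `a`. By Cauchy–Schwarz
it suffices that `0 ≤ A` and `hs(w) ≤ A`. The first holds because `2A` is a combination of
`cosh (α ± β)` with weights `t ± r₂ ≥ 0`; the second because
`A² - B² = (t² - r₂²)(a² + b² - 1)` and `t² - r₂²` bounds the squared norm of the rest of `v₂`.
-/

open Real

theorem Fin.sum_sum_univ_succ_succ {M : Type*} [AddCommMonoid M] {m n : ℕ}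
    (f : Fin (m + 1) → Fin (n + 1) → M) :
    ∑ i, ∑ j, f i j = f 0 0 + ∑ j : Fin n, f 0 j.succ + ∑ i : Fin m, f i.succ 0 +
      ∑ i : Fin m, ∑ j : Fin n, f i.succ j.succ := by
  simp only [Fin.sum_univ_succ, Finset.sum_add_distrib]
  abel

theorem Real.neg_sqrt_mul_sqrt_le_sum_sum_mul {ι κ : Type*} [Fintype ι] [Fintype κ]
    (f g : ι → κ → ℝ) :
    -(√(∑ i, ∑ j, f i j ^ 2) * √(∑ i, ∑ j, g i j ^ 2)) ≤ ∑ i, ∑ j, f i j * g i j := by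
  have h := Real.sum_mul_le_sqrt_mul_sqrt Finset.univ (fun p : ι × κ => -f p.1 p.2)
    (fun p => g p.1 p.2)
  simp only [Fintype.sum_prod_type, neg_mul, Finset.sum_neg_distrib, neg_sq] at h
  linarith

theorem Real.mul_cosh_mul_cosh_add_mul_sinh_mul_sinh_nonneg {r t : ℝ} (hr : |r| ≤ t) (α β : ℝ) :
    0 ≤ t * (cosh α * cosh β) + r * (sinh α * sinh β) := by
  have hcosh : 2 * (t * (cosh α * cosh β) + r * (sinh α * sinh β)) =
      (t + r) * cosh (α + β) + (t - r) * cosh (α - β) := by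
    rw [cosh_add, cosh_sub]; ring
  obtain ⟨hrt, hrt'⟩ := abs_le.mp hr
  nlinarith [one_le_cosh (α + β), one_le_cosh (α - β)]

def Matrix.rescaleBorder {m n : ℕ} (c a b : ℝ) (v : Matrix (Fin (m + 1)) (Fin (n + 1)) ℝ) :
    Matrix (Fin (m + 1)) (Fin (n + 1)) ℝ :=
  Matrix.of <| Fin.cases (Fin.cases c fun j => b * v 0 j.succ)
    fun i => Fin.cases (a * v i.succ 0) fun j => v i.succ j.succ

theorem Matrix.sum_sq_rescaleBorder_le {m n : ℕ} {t : ℝ}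
    (v : Matrix (Fin (m + 1)) (Fin (n + 1)) ℝ) (hv : ∑ i, ∑ j, v i j ^ 2 ≤ t ^ 2) (α β : ℝ) :
    ∑ i, ∑ j, v.rescaleBorder (v 0 0 * (cosh α * cosh β) + t * (sinh α * sinh β))
        (cosh α) (cosh β) i j ^ 2 ≤
      (t * (cosh α * cosh β) + v 0 0 * (sinh α * sinh β)) ^ 2 := by
  set r := v 0 0
  have hdiff : (t * (cosh α * cosh β) + r * (sinh α * sinh β)) ^ 2 -
      (r * (cosh α * cosh β) + t * (sinh α * sinh β)) ^ 2 =
      (t ^ 2 - r ^ 2) * (cosh α ^ 2 + cosh β ^ 2 - 1) := by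
    linear_combination (t ^ 2 - r ^ 2) * (cosh β ^ 2 - 1) * cosh_sq_sub_sinh_sq α +
      (t ^ 2 - r ^ 2) * sinh α ^ 2 * cosh_sq_sub_sinh_sq β
  have ha : 0 ≤ cosh α ^ 2 - 1 := sub_nonneg.2 (one_le_pow₀ (one_le_cosh α))
  have hb : 0 ≤ cosh β ^ 2 - 1 := sub_nonneg.2 (one_le_pow₀ (one_le_cosh β))
  have hX : 0 ≤ ∑ j : Fin n, v 0 j.succ ^ 2 := by positivity
  have hY : 0 ≤ ∑ i : Fin m, v i.succ 0 ^ 2 := by positivity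
  have hW : 0 ≤ ∑ i : Fin m, ∑ j : Fin n, v i.succ j.succ ^ 2 := by positivity
  rw [Fin.sum_sum_univ_succ_succ] at hv ⊢
  simp only [rescaleBorder, of_apply, Fin.cases_zero, Fin.cases_succ, mul_pow,
    ← Finset.mul_sum]
  nlinarith [mul_nonneg hX ha, mul_nonneg hY hb, mul_nonneg hW ha, mul_nonneg hW hb]

theorem boost_trace_nonneg_general {m n : ℕ} (s t : ℝ)
    (v₁ v₂ : Matrix (Fin (m + 1)) (Fin (n + 1)) ℝ)
    (hv₁ : Real.sqrt (∑ i, ∑ j, v₁ i j ^ 2) ≤ s)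
    (hv₂ : Real.sqrt (∑ i, ∑ j, v₂ i j ^ 2) ≤ t)
    (α β : ℝ) :
    0 ≤ s * t * (cosh α * cosh β) + v₁ 0 0 * v₂ 0 0 * (cosh α * cosh β) +
        (s * v₂ 0 0 + t * v₁ 0 0) * (sinh α * sinh β) +
        (∑ j : Fin n, v₁ 0 j.succ * v₂ 0 j.succ) * cosh β +
        (∑ i : Fin m, v₁ i.succ 0 * v₂ i.succ 0) * cosh α +
        ∑ i : Fin m, ∑ j : Fin n, v₁ i.succ j.succ * v₂ i.succ j.succ := by
  obtain ⟨ht, hv₂⟩ := Real.sqrt_le_iff.mp hv₂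
  set A := t * (cosh α * cosh β) + v₂ 0 0 * (sinh α * sinh β)
  set w := v₂.rescaleBorder (v₂ 0 0 * (cosh α * cosh β) + t * (sinh α * sinh β))
    (cosh α) (cosh β)
  have hr : |v₂ 0 0| ≤ t := by
    refine abs_le_of_sq_le_sq ?_ ht
    calc v₂ 0 0 ^ 2 ≤ ∑ j, v₂ 0 j ^ 2 :=
          Finset.single_le_sum (fun j _ => sq_nonneg (v₂ 0 j)) (Finset.mem_univ 0)
      _ ≤ ∑ i, ∑ j, v₂ i j ^ 2 :=
          Finset.single_le_sum (f := fun i => ∑ j, v₂ i j ^ 2) (fun i _ => by positivity)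
            (Finset.mem_univ 0)
      _ ≤ t ^ 2 := hv₂
  have hA : 0 ≤ A := mul_cosh_mul_cosh_add_mul_sinh_mul_sinh_nonneg hr α β
  have hw : √(∑ i, ∑ j, w i j ^ 2) ≤ A :=
    (sqrt_le_left hA).mpr (v₂.sum_sq_rescaleBorder_le hv₂ α β)
  calc 0 ≤ s * A - √(∑ i, ∑ j, v₁ i j ^ 2) * √(∑ i, ∑ j, w i j ^ 2) :=
        sub_nonneg.2 (mul_le_mul hv₁ hw (sqrt_nonneg _) ((sqrt_nonneg _).trans hv₁))
    _ ≤ s * A + ∑ i, ∑ j, v₁ i j * w i j := by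
        linarith [neg_sqrt_mul_sqrt_le_sum_sum_mul v₁ w]
    _ = _ := by
        simp only [Fin.sum_sum_univ_succ_succ, w, Matrix.rescaleBorder, Matrix.of_apply,
          Fin.cases_zero, Fin.cases_succ, A, mul_left_comm (v₁ _ _) (cosh _),
          ← Finset.mul_sum]
        ring

/-- The positivity inequality `Tr[(s ⊕ v₁ᵀ) P_α (t ⊕ v₂) Q_β] ≥ 0` for central maps with
Hilbert-Schmidt norms `hs(v₁) ≤ s`, `hs(v₂) ≤ t` and Lorentz boosts `P_α, Q_β`, written out
in block coordinates `vₐ = [[rₐ, xₐᵀ],[yₐ, Vₐ]]`. -/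
theorem boost_trace_nonneg {m n : ℕ} (s t : ℝ) (hs0 : 0 ≤ s) (ht0 : 0 ≤ t)
    (v₁ v₂ : Matrix (Fin (m + 1)) (Fin (n + 1)) ℝ)
    (hv₁ : Real.sqrt (∑ i, ∑ j, v₁ i j ^ 2) ≤ s)
    (hv₂ : Real.sqrt (∑ i, ∑ j, v₂ i j ^ 2) ≤ t)
    (α β : ℝ) :
    0 ≤ s * t * (cosh α * cosh β) + v₁ 0 0 * v₂ 0 0 * (cosh α * cosh β) +
        (s * v₂ 0 0 + t * v₁ 0 0) * (sinh α * sinh β) +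
        (∑ j : Fin n, v₁ 0 j.succ * v₂ 0 j.succ) * cosh β +
        (∑ i : Fin m, v₁ i.succ 0 * v₂ i.succ 0) * cosh α +
        ∑ i : Fin m, ∑ j : Fin n, v₁ i.succ j.succ * v₂ i.succ j.succ :=
  boost_trace_nonneg_general s t v₁ v₂ hv₁ hv₂ α β
end

section
/- The Banach-Mazur distance from ℓ₁^n to ℓ₂^n equals √n; equivalently, the Hilbert-space factorization norm of the identity map satisfies γ₂(id : ℓ₁^n → ℓ₁^n) = √n. -/
/-!
The factorization `ℓ₁^n → ℓ₂^n → ℓ₁^n` through the formal identities has cost `1 · √n`, by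
Cauchy–Schwarz. Conversely, let `id = v ∘ u` with `u` into a Hilbert space. Averaging over
signs, the vectors `u eᵢ` satisfy `𝔼 ‖∑ εᵢ u eᵢ‖² = ∑ ‖u eᵢ‖² ≤ n ‖u‖²`, so some sign vector
`x = ∑ εᵢ eᵢ`, of `ℓ₁`-norm `n`, has `‖u x‖ ≤ √n ‖u‖`, whence `n = ‖v (u x)‖ ≤ √n ‖u‖ ‖v‖`.
-/

/-- `ℓ₁^n`: `ℝ^n` with the `ℓ1` norm. -/
abbrev ellOne (n : ℕ) := PiLp 1 (fun _ : Fin n => ℝ)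

open Finset

section Rademacher

variable {ι : Type*} [Fintype ι] [DecidableEq ι]

theorem sum_units_mul_units (i j : ι) :
    ∑ ε : ι → ℤˣ, (ε i : ℤ) * ε j = if i = j then 2 ^ Fintype.card ι else 0 := by
  split_ifs with hij
  · subst hij
    simp [← Units.val_mul, Int.units_mul_self, Fintype.card_units_int]
  · -- flipping the `i`-th sign is a bijection of `ι → ℤˣ` that negates every term
    have hflip := Equiv.sum_comp (Equiv.mulRight (Pi.mulSingle i (-1) : ι → ℤˣ))
      (fun ε : ι → ℤˣ => (ε i : ℤ) * ε j)
    simp only [Equiv.coe_mulRight, Pi.mul_apply, Pi.mulSingle_eq_same,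
      Pi.mulSingle_eq_of_ne' hij, mul_one, Units.val_neg,
      mul_neg_one, neg_mul, sum_neg_distrib] at hflip
    omega

variable {F : Type*} [NormedAddCommGroup F] [InnerProductSpace ℝ F]

theorem sum_norm_sum_units_smul_sq (u : ι → F) :
    ∑ ε : ι → ℤˣ, ‖∑ i, ((ε i : ℤ) : ℝ) • u i‖ ^ 2 = 2 ^ Fintype.card ι * ∑ i, ‖u i‖ ^ 2 := by
  calc ∑ ε : ι → ℤˣ, ‖∑ i, ((ε i : ℤ) : ℝ) • u i‖ ^ 2
      = ∑ i, ∑ j, ((∑ ε : ι → ℤˣ, (ε i : ℤ) * ε j : ℤ) : ℝ) * inner ℝ (u i) (u j) := by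
        simp_rw [← real_inner_self_eq_norm_sq, sum_inner, inner_sum, real_inner_smul_left,
          real_inner_smul_right, Int.cast_sum, Int.cast_mul, sum_mul, ← mul_assoc]
        rw [sum_comm]
        exact sum_congr rfl fun _ _ => sum_comm
    _ = 2 ^ Fintype.card ι * ∑ i, ‖u i‖ ^ 2 := by
        simp [sum_units_mul_units, mul_sum]

theorem exists_units_norm_sum_smul_sq_le (u : ι → F) :
    ∃ ε : ι → ℤˣ, ‖∑ i, ((ε i : ℤ) : ℝ) • u i‖ ^ 2 ≤ ∑ i, ‖u i‖ ^ 2 := by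
  obtain ⟨ε, -, hε⟩ := exists_le_of_sum_le univ_nonempty
    (f := fun ε : ι → ℤˣ => ‖∑ i, ((ε i : ℤ) : ℝ) • u i‖ ^ 2) (g := fun _ => ∑ i, ‖u i‖ ^ 2)
    (by simp [sum_norm_sum_units_smul_sq, Fintype.card_units_int])
  exact ⟨ε, hε⟩

end Rademacher

section PiLp

variable {ι : Type*} [Fintype ι]

theorem PiLp.norm_toLp_two_le_norm_toLp_one {β : ι → Type*} [∀ i, SeminormedAddCommGroup (β i)]
    (x : ∀ i, β i) : ‖WithLp.toLp 2 x‖ ≤ ‖WithLp.toLp 1 x‖ := by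
  rw [PiLp.norm_eq_of_L2, PiLp.norm_eq_of_L1, Real.sqrt_le_left (by positivity)]
  exact sum_sq_le_sq_sum_of_nonneg fun i _ => norm_nonneg (x i)

theorem PiLp.norm_toLp_one_le_sqrt_card_mul_norm_toLp_two {β : ι → Type*}
    [∀ i, SeminormedAddCommGroup (β i)] (x : ∀ i, β i) :
    ‖WithLp.toLp 1 x‖ ≤ √(Fintype.card ι) * ‖WithLp.toLp 2 x‖ := by
  rw [PiLp.norm_eq_of_L2, PiLp.norm_eq_of_L1, ← Real.sqrt_mul (Nat.cast_nonneg _),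
    Real.le_sqrt (by positivity) (by positivity)]
  simpa using sq_sum_le_card_mul_sum_sq (s := univ) (f := fun i => ‖x i‖)

end PiLp

theorem sqrt_card_le_norm_mul_norm_of_comp_eq_id {ι F : Type*} [Fintype ι] [NormedAddCommGroup F]
    [InnerProductSpace ℝ F]
    (u : PiLp 1 (fun _ : ι => ℝ) →L[ℝ] F) (v : F →L[ℝ] PiLp 1 (fun _ : ι => ℝ))
    (h : v ∘L u = ContinuousLinearMap.id ℝ _) :
    √(Fintype.card ι) ≤ ‖u‖ * ‖v‖ := by
  classical
  set e := PiLp.basisFun 1 ℝ ι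
  obtain ⟨ε, hε⟩ := exists_units_norm_sum_smul_sq_le fun i => u (e i)
  set x : PiLp 1 (fun _ : ι => ℝ) := WithLp.toLp 1 fun i => ((ε i : ℤ) : ℝ)
  have hx : ‖x‖ = Fintype.card ι := by simp [x, PiLp.norm_eq_of_L1, abs_unit_intCast]
  have hux : u x = ∑ i, ((ε i : ℤ) : ℝ) • u (e i) := by
    conv_lhs => rw [← e.sum_repr x]
    simp [x, e]
  have hue : ∀ i, ‖u (e i)‖ ≤ ‖u‖ := fun i => by
    simpa [e, PiLp.norm_single] using u.le_opNorm (e i)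
  have hvux : (Fintype.card ι : ℝ) ≤ ‖v‖ * ‖u x‖ := by
    calc (Fintype.card ι : ℝ) = ‖v (u x)‖ := by
          rw [← hx, ← ContinuousLinearMap.comp_apply, h]; rfl
      _ ≤ ‖v‖ * ‖u x‖ := v.le_opNorm _
  have hux_sq : ‖u x‖ ^ 2 ≤ Fintype.card ι * ‖u‖ ^ 2 := by
    calc ‖u x‖ ^ 2 ≤ ∑ i, ‖u (e i)‖ ^ 2 := hux ▸ hε
      _ ≤ ∑ _i : ι, ‖u‖ ^ 2 := by gcongr with i; exact hue i
      _ = Fintype.card ι * ‖u‖ ^ 2 := by simp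
  have hcard_sq : (Fintype.card ι : ℝ) ^ 2 ≤ Fintype.card ι * (‖u‖ * ‖v‖) ^ 2 := by
    calc (Fintype.card ι : ℝ) ^ 2 ≤ ‖v‖ ^ 2 * ‖u x‖ ^ 2 := by
          rw [← mul_pow]; exact pow_le_pow_left₀ (Nat.cast_nonneg _) hvux 2
      _ ≤ ‖v‖ ^ 2 * (Fintype.card ι * ‖u‖ ^ 2) := by gcongr
      _ = Fintype.card ι * (‖u‖ * ‖v‖) ^ 2 := by ring
  rw [Real.sqrt_le_left (by positivity)]
  nlinarith [sq_nonneg (‖u‖ * ‖v‖), (Nat.cast_nonneg (Fintype.card ι) : (0 : ℝ) ≤ _)]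

section Factorization

variable (ι : Type*) [Fintype ι]

noncomputable def ellOneToEuclidean : PiLp 1 (fun _ : ι => ℝ) →L[ℝ] EuclideanSpace ℝ ι :=
  LinearMap.mkContinuous
    ((WithLp.linearEquiv 2 ℝ (ι → ℝ)).symm.toLinearMap ∘ₗ
      (WithLp.linearEquiv 1 ℝ (ι → ℝ)).toLinearMap)
    1 fun x => by simpa using PiLp.norm_toLp_two_le_norm_toLp_one x.ofLp

noncomputable def euclideanToEllOne : EuclideanSpace ℝ ι →L[ℝ] PiLp 1 (fun _ : ι => ℝ) :=
  LinearMap.mkContinuous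
    ((WithLp.linearEquiv 1 ℝ (ι → ℝ)).symm.toLinearMap ∘ₗ
      (WithLp.linearEquiv 2 ℝ (ι → ℝ)).toLinearMap)
    √(Fintype.card ι) fun x => by
      simpa using PiLp.norm_toLp_one_le_sqrt_card_mul_norm_toLp_two x.ofLp

theorem euclideanToEllOne_comp_ellOneToEuclidean :
    euclideanToEllOne ι ∘L ellOneToEuclidean ι = ContinuousLinearMap.id ℝ _ :=
  rfl

theorem norm_ellOneToEuclidean_mul_norm_euclideanToEllOne :
    ‖ellOneToEuclidean ι‖ * ‖euclideanToEllOne ι‖ = √(Fintype.card ι) := by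
  refine le_antisymm ?_ <| sqrt_card_le_norm_mul_norm_of_comp_eq_id _ _ <|
    euclideanToEllOne_comp_ellOneToEuclidean ι
  calc ‖ellOneToEuclidean ι‖ * ‖euclideanToEllOne ι‖ ≤ 1 * √(Fintype.card ι) :=
        mul_le_mul (LinearMap.mkContinuous_norm_le _ zero_le_one _)
          (LinearMap.mkContinuous_norm_le _ (Real.sqrt_nonneg _) _) (norm_nonneg _) zero_le_one
    _ = √(Fintype.card ι) := one_mul _

end Factorization

/-- The Hilbert-space factorization norm `γ₂` of the identity on `ℓ₁^n` equals `√n`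
(this is the Banach-Mazur distance `d(ℓ₁^n, ℓ₂^n)`). -/
theorem gamma2_id_ellOne (n : ℕ) :
    sInf {c : ℝ | ∃ (k : ℕ) (v₁ : ellOne n →L[ℝ] EuclideanSpace ℝ (Fin k))
        (v₂ : EuclideanSpace ℝ (Fin k) →L[ℝ] ellOne n),
        ContinuousLinearMap.id ℝ (ellOne n) = v₂.comp v₁ ∧ c = ‖v₁‖ * ‖v₂‖} =
      Real.sqrt n := by
  refine IsLeast.csInf_eq ⟨⟨n, ellOneToEuclidean (Fin n), euclideanToEllOne (Fin n),
    (euclideanToEllOne_comp_ellOneToEuclidean _).symm, ?_⟩, ?_⟩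
  · simpa using (norm_ellOneToEuclidean_mul_norm_euclideanToEllOne (Fin n)).symm
  · rintro c ⟨k, v₁, v₂, hid, rfl⟩
    simpa using sqrt_card_le_norm_mul_norm_of_comp_eq_id v₁ v₂ hid.symm
end
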